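/- Define V(α, γ) = α·μ + γ·B·φ(Φ^{-1}(1−α)) with constants μ, B > 0. Then for any γ, Δ_r ∈ (0,1) and α, Δ_α > 0 with α + Δ_α < 0.05 and Δ_α ≤ 4α, the prediction-access ratio PAR = (V(α+Δ_α, γ) − V(α, γ)) / (V(α, γ+Δ_r) − V(α, γ)) satisfies (1/4)·(1/α)·(μ/(B·Φ^{-1}(1−α)) + γ)·(Δ_α/Δ_r) ≤ PAR ≤ (1/α)·(μ/(B·Φ^{-1}(1−α)) + γ)·(Δ_α/Δ_r). -/

import Mathlib

noncomputable def phi (x : ℝ) : ℝ := (Real.sqrt (2 * Real.pi))⁻¹ * Real.exp (-x ^ 2 / 2)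

noncomputable def Phi (t : ℝ) : ℝ := ∫ z in Set.Iic t, phi z

/-- The standard normal quantile function. -/
noncomputable def Phiinv (p : ℝ) : ℝ := sInf {t : ℝ | p ≤ Phi t}

/-- Value function of the linear regression model:
`V(α, γ) = α μ + γ B φ(Φ⁻¹(1-α))`. -/
noncomputable def Vlin (μ B α γ : ℝ) : ℝ := α * μ + γ * B * phi (Phiinv (1 - α))

/-!
Write `Q = 1 - Φ` for the Gaussian tail, `x = Φ⁻¹(1 - α)` and `y = Φ⁻¹(1 - α - Δα)`, so that
`Q x = α`, `Q y = α + Δα` and `PAR = (Δα μ + γ B (φ y - φ x)) / (Δr B φ x)`.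
Since `φ' = -t φ`, the increment `φ y - φ x = ∫_y^x t φ(t) dt` lies between `y Δα` and `x Δα`.
The upper bound then follows from Mills' inequality `x Q(x) ≤ φ(x)`, and the lower bound from
`φ(x) ≤ 4 α y`. The latter combines Mills' lower bound `φ(x) (x² - 1) ≤ Q(x) x³` with the
closeness of the two quantiles: both exceed `7/5` because `α + Δα < 1/20 ≤ Q(7/5)`, and
`Q y ≤ 5 Q x` forces `x² - y² < 20`.
-/

open MeasureTheory Set Filter Real Topology

lemma phi_pos (x : ℝ) : 0 < phi x := by
  unfold phi; positivity

lemma phi_le_one (x : ℝ) : phi x ≤ 1 := by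
  have hsqrt : 1 ≤ √(2 * π) := by
    rw [Real.one_le_sqrt]; nlinarith [pi_gt_three]
  have hexp : exp (-x ^ 2 / 2) ≤ 1 := exp_le_one_iff.2 (by nlinarith [sq_nonneg x])
  exact mul_le_one₀ (inv_le_one_of_one_le₀ hsqrt) (exp_pos _).le hexp

lemma continuous_phi : Continuous phi := by
  unfold phi; fun_prop

lemma integrable_phi : Integrable phi := by
  have h := (integrable_exp_neg_mul_sq (b := 1 / 2) (by norm_num)).const_mul (√(2 * π))⁻¹
  convert h using 2 with x
  unfold phi; ring_nf

lemma integral_phi : ∫ x, phi x = 1 := by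
  have h : ∫ x : ℝ, exp (-x ^ 2 / 2) = √(2 * π) := by
    rw [show 2 * π = π / (1 / 2) by field_simp, ← integral_gaussian]
    congr 1 with x; ring_nf
  unfold phi
  rw [integral_const_mul, h, inv_mul_cancel₀ (by positivity)]

lemma hasDerivAt_neg_phi (x : ℝ) : HasDerivAt (fun s => -phi s) (x * phi x) x := by
  have h : HasDerivAt (fun s : ℝ => -s ^ 2 / 2) (-x) x :=
    ((hasDerivAt_pow 2 x).neg.div_const 2).congr_deriv (by norm_num; ring)
  exact (h.exp.const_mul (√(2 * π))⁻¹).neg.congr_deriv (by unfold phi; ring)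

lemma tendsto_phi_atTop : Tendsto phi atTop (𝓝 0) := by
  have h : Tendsto (fun s : ℝ => -s ^ 2 / 2) atTop atBot :=
    (tendsto_neg_atBot_iff.2 (tendsto_pow_atTop two_ne_zero)).atBot_div_const two_pos
  have := (tendsto_exp_atBot.comp h).const_mul (√(2 * π))⁻¹
  rwa [mul_zero] at this

lemma phi_eq_phi_mul_exp (x y : ℝ) : phi y = phi x * exp ((x ^ 2 - y ^ 2) / 2) := by
  unfold phi
  rw [mul_assoc, ← exp_add]
  ring_nf

lemma le_phi_seven_div_five : 343 / 2400 ≤ phi (7 / 5) := by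
  have hsqrt : √(2 * π) < 2.51 := by
    rw [sqrt_lt' (by norm_num)]; nlinarith [pi_lt_d2]
  have hexp : exp (-1) ≤ exp (-(7 / 5 : ℝ) ^ 2 / 2) := exp_le_exp.2 (by norm_num)
  have he : exp (-1) * exp 1 = 1 := by rw [← exp_add]; simp
  have he1 := exp_one_lt_d9
  have hs := sqrt_nonneg (2 * π)
  unfold phi
  rw [inv_mul_eq_div, le_div_iff₀ (by positivity)]
  nlinarith [exp_pos (-1), exp_pos 1, mul_pos (exp_pos (-1)) (exp_pos 1)]

noncomputable def normalTail (x : ℝ) : ℝ := ∫ t in Ioi x, phi t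

lemma Phi_add_normalTail (x : ℝ) : Phi x + normalTail x = 1 := by
  rw [Phi, normalTail, intervalIntegral.integral_Iic_add_Ioi integrable_phi.integrableOn
    integrable_phi.integrableOn, integral_phi]

lemma Phi_sub_Phi (a b : ℝ) : Phi b - Phi a = ∫ t in a..b, phi t :=
  intervalIntegral.integral_Iic_sub_Iic integrable_phi.integrableOn integrable_phi.integrableOn

lemma normalTail_sub_normalTail (a b : ℝ) : normalTail a - normalTail b = ∫ t in a..b, phi t := by
  linarith [Phi_add_normalTail a, Phi_add_normalTail b, Phi_sub_Phi a b]

lemma strictMono_Phi : StrictMono Phi := fun a b hab => by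
  have := intervalIntegral.intervalIntegral_pos_of_pos integrable_phi.intervalIntegrable phi_pos hab
  linarith [Phi_sub_Phi a b]

lemma continuous_normalTail : Continuous normalTail := by
  have h : normalTail = fun x => normalTail 0 - ∫ t in (0 : ℝ)..x, phi t := by
    ext x; linarith [normalTail_sub_normalTail 0 x]
  rw [h]
  exact continuous_const.sub (integrable_phi.continuous_primitive 0)

lemma normalTail_nonneg (x : ℝ) : 0 ≤ normalTail x :=
  setIntegral_nonneg measurableSet_Ioi fun t _ => (phi_pos t).le

lemma mul_phi_nonneg_of_nonneg {x t : ℝ} (hx : 0 ≤ x) (ht : t ∈ Ioi x) : 0 ≤ t * phi t :=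
  mul_nonneg (hx.trans (le_of_lt ht)) (phi_pos t).le

lemma integrableOn_Ioi_mul_phi {x : ℝ} (hx : 0 ≤ x) :
    IntegrableOn (fun t => t * phi t) (Ioi x) :=
  integrableOn_Ioi_deriv_of_nonneg' (fun t _ => hasDerivAt_neg_phi t)
    (fun _ ht => mul_phi_nonneg_of_nonneg hx ht) (by simpa using tendsto_phi_atTop.neg)

lemma integral_Ioi_mul_phi {x : ℝ} (hx : 0 ≤ x) : ∫ t in Ioi x, t * phi t = phi x := by
  have := integral_Ioi_of_hasDerivAt_of_nonneg' (fun t _ => hasDerivAt_neg_phi t)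
    (fun _ ht => mul_phi_nonneg_of_nonneg hx ht) (by simpa using tendsto_phi_atTop.neg)
  simpa using this

lemma mul_normalTail_le_phi {x : ℝ} (hx : 0 ≤ x) : x * normalTail x ≤ phi x := by
  rw [normalTail, ← integral_const_mul, ← integral_Ioi_mul_phi hx]
  exact setIntegral_mono_on (integrable_phi.integrableOn.const_mul x)
    (integrableOn_Ioi_mul_phi hx) measurableSet_Ioi
    (fun t ht => mul_le_mul_of_nonneg_right (le_of_lt ht) (phi_pos t).le)

lemma phi_mul_sq_sub_one_le {x : ℝ} (hx : 0 < x) :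
    phi x * (x ^ 2 - 1) ≤ normalTail x * x ^ 3 := by
  have hderiv : ∀ t ∈ Ici x, HasDerivAt (fun s => -phi s / s) (phi t + phi t / t ^ 2) t :=
    fun t ht => by
      have ht0 : t ≠ 0 := (hx.trans_le ht).ne'
      exact ((hasDerivAt_neg_phi t).div (hasDerivAt_id t) ht0).congr_deriv
        (by simp only [id]; field_simp; ring)
  have hnonneg : ∀ t ∈ Ioi x, 0 ≤ phi t + phi t / t ^ 2 :=
    fun t _ => by have := phi_pos t; positivity
  have hlim : Tendsto (fun s => -phi s / s) atTop (𝓝 0) :=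
    tendsto_phi_atTop.neg.div_atTop tendsto_id
  have hint : IntegrableOn (fun t => phi t / t ^ 2) (Ioi x) :=
    ((integrableOn_Ioi_deriv_of_nonneg' hderiv hnonneg hlim).sub
      integrable_phi.integrableOn).congr (Eventually.of_forall fun t => by simp)
  have hsplit : normalTail x + ∫ t in Ioi x, phi t / t ^ 2 = phi x / x := by
    rw [normalTail, ← integral_add integrable_phi.integrableOn hint,
      integral_Ioi_of_hasDerivAt_of_nonneg' hderiv hnonneg hlim]
    ring
  have hbound : ∫ t in Ioi x, phi t / t ^ 2 ≤ phi x / x ^ 3 := by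
    rw [← integral_Ioi_mul_phi hx.le, ← integral_div]
    refine setIntegral_mono_on hint ((integrableOn_Ioi_mul_phi hx.le).div_const _)
      measurableSet_Ioi fun t (ht : x < t) => ?_
    have := phi_pos t
    have ht2 := pow_pos (hx.trans ht) 2
    rw [div_le_div_iff₀ ht2 (by positivity)]
    nlinarith [pow_le_pow_left₀ hx.le ht.le 3]
  have h3 : phi x / x - phi x / x ^ 3 ≤ normalTail x := by linarith
  calc phi x * (x ^ 2 - 1) = (phi x / x - phi x / x ^ 3) * x ^ 3 := by field_simp
    _ ≤ normalTail x * x ^ 3 := by gcongr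

lemma le_normalTail_seven_div_five : 1 / 20 ≤ normalTail (7 / 5) := by
  nlinarith [phi_mul_sq_sub_one_le (show (0 : ℝ) < 7 / 5 by norm_num), le_phi_seven_div_five]

lemma exists_normalTail_eq {a q : ℝ} (hq : 0 < q) (hqa : q ≤ normalTail a) :
    ∃ t, a ≤ t ∧ normalTail t = q := by
  set b := max a (1 / q)
  have hb : 0 < b := (one_div_pos.2 hq).trans_le (le_max_right _ _)
  have hqb : normalTail b ≤ q := by
    have h1 : b * normalTail b ≤ 1 := (mul_normalTail_le_phi hb.le).trans (phi_le_one b)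
    have h2 : 1 ≤ b * q := by
      have := mul_le_mul_of_nonneg_right (le_max_right a (1 / q)) hq.le
      rwa [one_div_mul_cancel hq.ne'] at this
    nlinarith [mul_le_mul_of_nonneg_left h2 (normalTail_nonneg b)]
  obtain ⟨t, ht, htq⟩ := intermediate_value_Icc' (le_max_left a (1 / q))
    continuous_normalTail.continuousOn ⟨hqb, hqa⟩
  exact ⟨t, ht.1, htq⟩

lemma Phiinv_one_sub_normalTail (x : ℝ) : Phiinv (1 - normalTail x) = x := by
  have h : {t | 1 - normalTail x ≤ Phi t} = Ici x := by
    ext t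
    rw [mem_ofPred_eq, mem_Ici, show 1 - normalTail x = Phi x by linarith [Phi_add_normalTail x],
      strictMono_Phi.le_iff_le]
  rw [Phiinv, h, csInf_Ici]

lemma phi_sub_phi (a b : ℝ) : phi a - phi b = ∫ t in a..b, t * phi t := by
  rw [intervalIntegral.integral_eq_sub_of_hasDerivAt (fun t _ => hasDerivAt_neg_phi t)
    ((continuous_id.mul continuous_phi).intervalIntegrable _ _)]
  ring

lemma mul_normalTail_sub_le_phi_sub {a b : ℝ} (hab : a ≤ b) :
    a * (normalTail a - normalTail b) ≤ phi a - phi b := by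
  rw [normalTail_sub_normalTail, phi_sub_phi, ← intervalIntegral.integral_const_mul]
  exact intervalIntegral.integral_mono_on hab
    ((continuous_const.mul continuous_phi).intervalIntegrable _ _)
    ((continuous_id.mul continuous_phi).intervalIntegrable _ _)
    fun t ht => mul_le_mul_of_nonneg_right ht.1 (phi_pos t).le

lemma phi_sub_le_mul_normalTail_sub {a b : ℝ} (hab : a ≤ b) :
    phi a - phi b ≤ b * (normalTail a - normalTail b) := by
  rw [normalTail_sub_normalTail, phi_sub_phi, ← intervalIntegral.integral_const_mul]
  exact intervalIntegral.integral_mono_on hab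
    ((continuous_id.mul continuous_phi).intervalIntegrable _ _)
    ((continuous_const.mul continuous_phi).intervalIntegrable _ _)
    fun t ht => mul_le_mul_of_nonneg_right ht.2 (phi_pos t).le

-- Mills' bounds at `y` (lower) and at `x` (upper) give
-- `exp ((x² - y²) / 2) = φ(y) / φ(x) ≤ 5 y² / (y² - 1) < 11`.
lemma sq_sub_sq_lt_of_normalTail_le {x y : ℝ} (hy : 7 / 5 ≤ y) (hyx : y ≤ x)
    (hQ : normalTail y ≤ 5 * normalTail x) : x ^ 2 - y ^ 2 < 20 := by
  have hx : 0 < x := by linarith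
  have hlower := phi_mul_sq_sub_one_le (show 0 < y by linarith)
  have hupper := mul_normalTail_le_phi hx.le
  set e := exp ((x ^ 2 - y ^ 2) / 2)
  have hratio : phi y = phi x * e := phi_eq_phi_mul_exp x y
  have he : e * (y ^ 2 - 1) ≤ 5 * y ^ 2 := by
    have h : phi x * (x * (e * (y ^ 2 - 1))) ≤ phi x * (x * (5 * y ^ 2)) := by
      calc phi x * (x * (e * (y ^ 2 - 1))) = x * (phi y * (y ^ 2 - 1)) := by rw [hratio]; ring
        _ ≤ x * (normalTail y * y ^ 3) := by gcongr
        _ ≤ x * (5 * normalTail x * y ^ 3) := by gcongr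
        _ = 5 * y ^ 3 * (x * normalTail x) := by ring
        _ ≤ 5 * y ^ 3 * phi x := by gcongr
        _ = 5 * phi x * y ^ 2 * y := by ring
        _ ≤ 5 * phi x * y ^ 2 * x :=
          mul_le_mul_of_nonneg_left hyx (by have := phi_pos x; positivity)
        _ = phi x * (x * (5 * y ^ 2)) := by ring
    exact le_of_mul_le_mul_left (le_of_mul_le_mul_left h (phi_pos x)) hx
  by_contra! hge
  have h11 : 11 ≤ e := by linarith [add_one_le_exp ((x ^ 2 - y ^ 2) / 2)]
  have hy2 : 49 / 25 ≤ y ^ 2 := by nlinarith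
  nlinarith [mul_le_mul_of_nonneg_right h11 (show 0 ≤ y ^ 2 - 1 by linarith)]

lemma pow_three_le_four_mul_of_sq_sub_sq_lt {x y : ℝ} (hy : 7 / 5 ≤ y) (hyx : y ≤ x)
    (hxy : x ^ 2 - y ^ 2 < 20) : x ^ 3 ≤ 4 * y * (x ^ 2 - 1) := by
  rcases le_or_gt x (47 / 10) with hx | hx
  · nlinarith [mul_nonneg (sub_nonneg.2 hx) (sub_nonneg.2 (hy.trans hyx)),
      mul_nonneg (sub_nonneg.2 hy) (sq_nonneg x)]
  · have hy2 : x ^ 2 - 20 < y ^ 2 := by linarith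
    have hx2 : 2209 / 100 < x ^ 2 := by nlinarith
    have hpoly : (x ^ 2) ^ 3 ≤ 16 * (x ^ 2 - 20) * (x ^ 2 - 1) ^ 2 := by
      nlinarith [mul_pos (sub_pos.2 hx2) (sub_pos.2 hx2), sq_nonneg (x ^ 2 - 1)]
    refine le_of_pow_le_pow_left₀ two_ne_zero (by nlinarith) ?_
    calc (x ^ 3) ^ 2 = (x ^ 2) ^ 3 := by ring
      _ ≤ 16 * (x ^ 2 - 20) * (x ^ 2 - 1) ^ 2 := hpoly
      _ ≤ 16 * y ^ 2 * (x ^ 2 - 1) ^ 2 := by gcongr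
      _ = (4 * y * (x ^ 2 - 1)) ^ 2 := by ring

lemma phi_le_four_mul_normalTail_mul {x y : ℝ} (hy : 7 / 5 ≤ y) (hyx : y ≤ x)
    (hQ : normalTail y ≤ 5 * normalTail x) : phi x ≤ 4 * normalTail x * y := by
  have hcube := pow_three_le_four_mul_of_sq_sub_sq_lt hy hyx
    (sq_sub_sq_lt_of_normalTail_le hy hyx hQ)
  have hx2 : 0 < x ^ 2 - 1 := by nlinarith
  refine le_of_mul_le_mul_right ?_ hx2
  calc phi x * (x ^ 2 - 1) ≤ normalTail x * x ^ 3 := phi_mul_sq_sub_one_le (by linarith)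
    _ ≤ normalTail x * (4 * y * (x ^ 2 - 1)) := by gcongr; exact normalTail_nonneg x
    _ = 4 * normalTail x * y * (x ^ 2 - 1) := by ring

section PredictionAccessRatio

variable {μ B γ Δr α Δα x y : ℝ}

lemma par_bound_eq (hB : 0 < B) (hΔr : 0 < Δr) (hα : 0 < α) (hx : 0 < x) :
    1 / α * (μ / (B * x) + γ) * (Δα / Δr) = Δα * (μ + γ * B * x) / (α * x * (Δr * B)) := by
  field_simp

lemma par_le (hμ : 0 ≤ μ) (hB : 0 < B) (hγ : 0 ≤ γ) (hΔr : 0 < Δr) (hα : 0 < α)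
    (hΔα : 0 ≤ Δα) (hx : 0 < x) (hmills : x * α ≤ phi x) (hinc : phi y - phi x ≤ x * Δα) :
    (Δα * μ + γ * B * (phi y - phi x)) / (Δr * (B * phi x)) ≤
      1 / α * (μ / (B * x) + γ) * (Δα / Δr) := by
  have hp := phi_pos x
  have key : α * x * (Δα * μ + γ * B * (phi y - phi x)) ≤ Δα * (μ + γ * B * x) * phi x := by
    nlinarith [mul_le_mul_of_nonneg_left hmills (by positivity : 0 ≤ Δα * (μ + γ * B * x)),
      mul_le_mul_of_nonneg_left hinc (by positivity : 0 ≤ α * x * γ * B)]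
  rw [par_bound_eq hB hΔr hα hx, div_le_div_iff₀ (by positivity) (by positivity)]
  nlinarith [mul_le_mul_of_nonneg_right key (by positivity : 0 ≤ Δr * B)]

lemma le_par (hμ : 0 ≤ μ) (hB : 0 < B) (hγ : 0 ≤ γ) (hΔr : 0 < Δr) (hα : 0 < α)
    (hΔα : 0 ≤ Δα) (hyx : y ≤ x) (hhazard : phi x ≤ 4 * α * y)
    (hinc : y * Δα ≤ phi y - phi x) :
    1 / 4 * (1 / α) * (μ / (B * x) + γ) * (Δα / Δr) ≤
      (Δα * μ + γ * B * (phi y - phi x)) / (Δr * (B * phi x)) := by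
  have hp := phi_pos x
  have hx : 0 < x := by nlinarith
  have key : Δα * (μ + γ * B * x) * phi x ≤ 4 * (α * x) * (Δα * μ + γ * B * (phi y - phi x)) := by
    nlinarith [mul_le_mul_of_nonneg_left hhazard (by positivity : 0 ≤ Δα * μ),
      mul_le_mul_of_nonneg_left hyx (by positivity : 0 ≤ 4 * α * Δα * μ),
      mul_le_mul_of_nonneg_left hhazard (by positivity : 0 ≤ γ * B * x * Δα),
      mul_le_mul_of_nonneg_left hinc (by positivity : 0 ≤ 4 * α * x * γ * B)]
  rw [mul_assoc (1 / 4), mul_assoc (1 / 4), par_bound_eq hB hΔr hα hx, mul_div_assoc',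
    div_le_div_iff₀ (by positivity) (by positivity)]
  nlinarith [mul_le_mul_of_nonneg_right key (by positivity : 0 ≤ Δr * B)]

end PredictionAccessRatio

/-- Prediction-access ratio bounds for the linear regression model. -/
theorem par_linear (μ B γ Δr α Δα : ℝ) (hμ : 0 < μ) (hB : 0 < B)
    (hγ : γ ∈ Set.Ioo (0 : ℝ) 1) (hΔr : Δr ∈ Set.Ioo (0 : ℝ) 1)
    (hα : 0 < α) (hΔα : 0 < Δα) (hsum : α + Δα < 0.05) (hΔα4 : Δα ≤ 4 * α) :
    (1 / 4) * (1 / α) * (μ / (B * Phiinv (1 - α)) + γ) * (Δα / Δr) ≤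
        (Vlin μ B (α + Δα) γ - Vlin μ B α γ) / (Vlin μ B α (γ + Δr) - Vlin μ B α γ) ∧
      (Vlin μ B (α + Δα) γ - Vlin μ B α γ) / (Vlin μ B α (γ + Δr) - Vlin μ B α γ) ≤
        (1 / α) * (μ / (B * Phiinv (1 - α)) + γ) * (Δα / Δr) := by
  obtain ⟨hγ, -⟩ := hγ
  obtain ⟨hΔr, -⟩ := hΔr
  have hsmall : α + Δα ≤ normalTail (7 / 5) := by
    norm_num at hsum; linarith [le_normalTail_seven_div_five]
  obtain ⟨y, hy, hQy⟩ := exists_normalTail_eq (by linarith) hsmall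
  obtain ⟨x, hyx, hQx⟩ := exists_normalTail_eq hα (show α ≤ normalTail y by linarith)
  have hΔ : normalTail y - normalTail x = Δα := by linarith
  have hPx : Phiinv (1 - α) = x := hQx ▸ Phiinv_one_sub_normalTail x
  have hPy : Phiinv (1 - (α + Δα)) = y := hQy ▸ Phiinv_one_sub_normalTail y
  have hnum : Vlin μ B (α + Δα) γ - Vlin μ B α γ = Δα * μ + γ * B * (phi y - phi x) := by
    rw [Vlin, Vlin, hPx, hPy]; ring
  have hden : Vlin μ B α (γ + Δr) - Vlin μ B α γ = Δr * (B * phi x) := by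
    rw [Vlin, Vlin, hPx]; ring
  have hlower := mul_normalTail_sub_le_phi_sub hyx
  have hupper := phi_sub_le_mul_normalTail_sub hyx
  rw [hΔ] at hlower hupper
  have hmills := mul_normalTail_le_phi (show 0 ≤ x by linarith)
  have htail := phi_le_four_mul_normalTail_mul hy hyx (by linarith)
  rw [hQx] at hmills htail
  rw [hnum, hden, hPx]
  exact ⟨le_par hμ.le hB hγ.le hΔr hα hΔα.le hyx (by linarith) hlower,
    par_le hμ.le hB hγ.le hΔr hα hΔα.le (by linarith) hmills hupper⟩
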